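/- Exact privacy characterization of the Gaussian mechanism (one-dimensional form): let Δ > 0, σ > 0, ε ≥ 0, and δ ∈ [0,1]. Then the following are equivalent: (i) for every t ∈ ℝ with |t| ≤ Δ and every Borel set A ⊆ ℝ, N(t, σ²)(A) ≤ e^ε · N(0, σ²)(A) + δ; (ii) Φ(Δ/(2σ) − εσ/Δ) − e^ε · Φ(−Δ/(2σ) − εσ/Δ) ≤ δ. -/

import Mathlib

open MeasureTheory ProbabilityTheory

/-- The standard Gaussian cumulative distribution function
`Φ(t) = (2π)^{-1/2} ∫_{−∞}^t e^{−y²/2} dy`. -/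
noncomputable def gaussCDF (t : ℝ) : ℝ :=
  (Real.sqrt (2 * Real.pi))⁻¹ * ∫ y in Set.Iic t, Real.exp (-y ^ 2 / 2)

/-!
For `t > 0` the likelihood ratio of `N(t, σ²)` to `N(0, σ²)` at `x` is
`exp ((t x - t² / 2) / σ²)`, increasing in `x`. Hence the set where it exceeds `e^ε` is a
half-line, and by the Neyman–Pearson argument this half-line maximises
`N(t, σ²)(A) - e^ε N(0, σ²)(A)`; its value is the privacy profile
`δ(t) = Φ(t/(2σ) - εσ/t) - e^ε Φ(-t/(2σ) - εσ/t)`. Negative shifts reduce to positive ones by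
the reflection `x ↦ -x`, and `δ' (t) = φ(t/(2σ) - εσ/t) / σ > 0`, so the worst shift is
`|t| = Δ`.
-/

open Set Real NNReal

lemma NNReal.mk_sq_ne_zero {σ : ℝ} (hσ : σ ≠ 0) : (⟨σ ^ 2, sq_nonneg σ⟩ : ℝ≥0) ≠ 0 := by
  simpa [← NNReal.coe_ne_zero] using hσ

lemma measureReal_gaussianReal (m : ℝ) {v : ℝ≥0} (hv : v ≠ 0) (s : Set ℝ) :
    (gaussianReal m v).real s = ∫ x in s, gaussianPDFReal m v x := by
  rw [measureReal_def, gaussianReal_apply_eq_integral m hv, ENNReal.toReal_ofReal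
    (integral_nonneg fun _ ↦ gaussianPDFReal_nonneg _ _ _)]

lemma measureReal_gaussianReal_neg (m : ℝ) (v : ℝ≥0) {A : Set ℝ} (hA : MeasurableSet A) :
    (gaussianReal (-m) v).real (-A) = (gaussianReal m v).real A := by
  rw [← gaussianReal_map_neg, map_measureReal_apply measurable_neg hA.neg, neg_preimage, neg_neg]

lemma gaussCDF_eq_setIntegral (t : ℝ) :
    gaussCDF t = ∫ y in Iic t, gaussianPDFReal 0 1 y := by
  simp [gaussCDF, gaussianPDFReal, integral_const_mul]

lemma hasDerivAt_gaussCDF (x : ℝ) : HasDerivAt gaussCDF (gaussianPDFReal 0 1 x) x := by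
  have hint := integrable_gaussianPDFReal 0 1
  have hcont : Continuous (gaussianPDFReal 0 1) := by
    rw [gaussianPDFReal_def]
    fun_prop
  have hFTC : gaussCDF = fun t ↦ gaussCDF 0 + ∫ y in (0 : ℝ)..t, gaussianPDFReal 0 1 y := by
    funext t
    rw [gaussCDF_eq_setIntegral, gaussCDF_eq_setIntegral,
      ← intervalIntegral.integral_Iic_sub_Iic hint.integrableOn hint.integrableOn]
    ring
  rw [hFTC]
  exact (intervalIntegral.integral_hasDerivAt_right hint.intervalIntegrable
    hcont.stronglyMeasurable.stronglyMeasurableAtFilter hcont.continuousAt).const_add _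

lemma gaussianReal_eq_map_affine (σ m : ℝ) :
    gaussianReal m ⟨σ ^ 2, sq_nonneg σ⟩ = (gaussianReal 0 1).map (fun x ↦ σ * x + m) := by
  have hcomp : (fun x ↦ σ * x + m) = (· + m) ∘ (σ * ·) := rfl
  rw [hcomp, ← Measure.map_map (measurable_add_const m) (measurable_const_mul σ),
    gaussianReal_map_const_mul, gaussianReal_map_add_const, mul_zero, zero_add, mul_one]
  rfl

lemma measureReal_gaussianReal_Iic {σ : ℝ} (hσ : 0 < σ) (m a : ℝ) :
    (gaussianReal m ⟨σ ^ 2, sq_nonneg σ⟩).real (Iic a) = gaussCDF ((a - m) / σ) := by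
  have hpre : (fun x ↦ σ * x + m) ⁻¹' Iic a = Iic ((a - m) / σ) := by
    ext x
    simp only [mem_preimage, mem_Iic, le_div_iff₀ hσ]
    constructor <;> intro h <;> linarith
  rw [gaussianReal_eq_map_affine, map_measureReal_apply (by fun_prop) measurableSet_Iic, hpre,
    measureReal_gaussianReal 0 one_ne_zero, gaussCDF_eq_setIntegral]

lemma measureReal_gaussianReal_Ioi {σ : ℝ} (hσ : 0 < σ) (m a : ℝ) :
    (gaussianReal m ⟨σ ^ 2, sq_nonneg σ⟩).real (Ioi a) = gaussCDF ((m - a) / σ) := by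
  have := nullSingletonClass_gaussianReal (μ := -m) (mk_sq_ne_zero hσ.ne')
  rw [← measureReal_gaussianReal_neg m ⟨σ ^ 2, sq_nonneg σ⟩ measurableSet_Ioi, neg_Ioi,
    measureReal_congr Iio_ae_eq_Iic, measureReal_gaussianReal_Iic hσ]
  congr 1
  ring

lemma setIntegral_le_setIntegral_pos {α : Type*} [MeasurableSpace α] {μ : Measure α} {f : α → ℝ}
    (hfm : Measurable f) (hf : Integrable f μ) {A : Set α} (hA : MeasurableSet A) :
    ∫ x in A, f x ∂μ ≤ ∫ x in {x | 0 < f x}, f x ∂μ := by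
  have hE : MeasurableSet {x | 0 < f x} := measurableSet_lt measurable_const hfm
  rw [← integral_indicator hA, ← integral_indicator hE]
  refine integral_mono (hf.indicator hA) (hf.indicator hE) fun x ↦ ?_
  simp only [indicator, mem_ofPred_eq]
  split_ifs <;> linarith

lemma gaussianPDFReal_eq_exp_mul (v : ℝ≥0) (t x : ℝ) :
    gaussianPDFReal t v x = exp ((t * x - t ^ 2 / 2) / v) * gaussianPDFReal 0 v x := by
  rcases eq_or_ne v 0 with rfl | hv
  · simp
  rw [gaussianPDFReal, gaussianPDFReal, mul_left_comm, ← exp_add]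
  congr 2
  field_simp
  ring

lemma setOf_exp_mul_gaussianPDFReal_lt {v : ℝ≥0} (hv : v ≠ 0) (ε : ℝ) {t : ℝ} (ht : 0 < t) :
    {x | exp ε * gaussianPDFReal 0 v x < gaussianPDFReal t v x} = Ioi (ε * v / t + t / 2) := by
  ext x
  have hv' : (0 : ℝ) < v := by positivity
  rw [mem_ofPred_eq, gaussianPDFReal_eq_exp_mul v t,
    mul_lt_mul_iff_left₀ (gaussianPDFReal_pos _ _ _ hv), exp_lt_exp, lt_div_iff₀ hv', mem_Ioi,
    div_add_div _ _ ht.ne' two_ne_zero, div_lt_iff₀ (by positivity)]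
  constructor <;> intro h <;> nlinarith

lemma measureReal_gaussianReal_sub_mul (t : ℝ) {v : ℝ≥0} (hv : v ≠ 0) (c : ℝ) (s : Set ℝ) :
    (gaussianReal t v).real s - c * (gaussianReal 0 v).real s =
      ∫ x in s, (gaussianPDFReal t v x - c * gaussianPDFReal 0 v x) := by
  rw [measureReal_gaussianReal t hv, measureReal_gaussianReal 0 hv, ← integral_const_mul,
    integral_sub (integrable_gaussianPDFReal _ _).integrableOn
      ((integrable_gaussianPDFReal _ _).const_mul c).integrableOn]

lemma measureReal_gaussianReal_sub_le_Ioi {v : ℝ≥0} (hv : v ≠ 0) (ε : ℝ) {t : ℝ} (ht : 0 < t)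
    {A : Set ℝ} (hA : MeasurableSet A) :
    (gaussianReal t v).real A - exp ε * (gaussianReal 0 v).real A ≤
      (gaussianReal t v).real (Ioi (ε * v / t + t / 2)) -
        exp ε * (gaussianReal 0 v).real (Ioi (ε * v / t + t / 2)) := by
  simp only [measureReal_gaussianReal_sub_mul t hv]
  rw [← setOf_exp_mul_gaussianPDFReal_lt hv ε ht]
  simp_rw [← sub_pos (b := exp ε * _)]
  exact setIntegral_le_setIntegral_pos (by fun_prop)
    ((integrable_gaussianPDFReal _ _).sub ((integrable_gaussianPDFReal _ _).const_mul _)) hA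

noncomputable def gaussianPrivacyProfile (σ ε t : ℝ) : ℝ :=
  gaussCDF (t / (2 * σ) - ε * σ / t) - exp ε * gaussCDF (-(t / (2 * σ)) - ε * σ / t)

section PrivacyProfile

variable {σ : ℝ} (hσ : 0 < σ) (ε : ℝ)
include hσ

lemma gaussianPrivacyProfile_eq_measureReal_Ioi {t : ℝ} (ht : 0 < t) :
    gaussianPrivacyProfile σ ε t =
      (gaussianReal t ⟨σ ^ 2, sq_nonneg σ⟩).real (Ioi (ε * σ ^ 2 / t + t / 2)) -
        exp ε * (gaussianReal 0 ⟨σ ^ 2, sq_nonneg σ⟩).real (Ioi (ε * σ ^ 2 / t + t / 2)) := by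
  rw [measureReal_gaussianReal_Ioi hσ, measureReal_gaussianReal_Ioi hσ, gaussianPrivacyProfile]
  congr 3 <;> field_simp <;> ring

lemma measureReal_gaussianReal_sub_le_gaussianPrivacyProfile {t : ℝ} (ht : t ≠ 0)
    {A : Set ℝ} (hA : MeasurableSet A) :
    (gaussianReal t ⟨σ ^ 2, sq_nonneg σ⟩).real A -
        exp ε * (gaussianReal 0 ⟨σ ^ 2, sq_nonneg σ⟩).real A ≤
      gaussianPrivacyProfile σ ε |t| := by
  have hv := mk_sq_ne_zero hσ.ne'
  rw [gaussianPrivacyProfile_eq_measureReal_Ioi hσ ε (abs_pos.2 ht)]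
  rcases ht.lt_or_gt with hneg | hpos
  · rw [← measureReal_gaussianReal_neg t ⟨σ ^ 2, sq_nonneg σ⟩ hA,
      ← measureReal_gaussianReal_neg 0 ⟨σ ^ 2, sq_nonneg σ⟩ hA, neg_zero, abs_of_neg hneg]
    exact measureReal_gaussianReal_sub_le_Ioi hv ε (neg_pos.2 hneg) hA.neg
  · rw [abs_of_pos hpos]
    exact measureReal_gaussianReal_sub_le_Ioi hv ε hpos hA

lemma hasDerivAt_gaussianPrivacyProfile {t : ℝ} (ht : 0 < t) :
    HasDerivAt (gaussianPrivacyProfile σ ε)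
      (gaussianPDFReal 0 1 (t / (2 * σ) - ε * σ / t) / σ) t := by
  have hlin : HasDerivAt (fun u : ℝ ↦ u / (2 * σ)) (1 / (2 * σ)) t := by
    simpa using (hasDerivAt_id t).div_const (2 * σ)
  have hinv : HasDerivAt (fun u : ℝ ↦ ε * σ / u) (-(ε * σ) / t ^ 2) t := by
    simpa [div_eq_mul_inv, neg_div] using (hasDerivAt_inv ht.ne').const_mul (ε * σ)
  have hchain := ((hasDerivAt_gaussCDF _).comp t (hlin.sub hinv)).sub
    (((hasDerivAt_gaussCDF _).comp t (hlin.neg.sub hinv)).const_mul (exp ε))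
  refine hchain.congr_deriv ?_
  -- the squares of the two arguments differ by `2ε`
  have hbalance : exp ε * gaussianPDFReal 0 1 (-(t / (2 * σ)) - ε * σ / t) =
      gaussianPDFReal 0 1 (t / (2 * σ) - ε * σ / t) := by
    rw [gaussianPDFReal, gaussianPDFReal, NNReal.coe_one, mul_left_comm, ← exp_add]
    congr 2
    field_simp
    ring
  simp only [Pi.sub_apply, Pi.neg_apply]
  rw [← mul_assoc, hbalance]
  field_simp
  ring

lemma gaussianPrivacyProfile_strictMonoOn : StrictMonoOn (gaussianPrivacyProfile σ ε) (Ioi 0) :=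
  strictMonoOn_of_deriv_pos (convex_Ioi 0)
    (fun _ hx ↦ (hasDerivAt_gaussianPrivacyProfile hσ ε hx).continuousAt.continuousWithinAt)
    fun x hx ↦ by
      rw [interior_Ioi] at hx
      rw [(hasDerivAt_gaussianPrivacyProfile hσ ε hx).deriv]
      exact div_pos (gaussianPDFReal_pos _ _ _ one_ne_zero) hσ

end PrivacyProfile

lemma measure_le_ofReal_mul_add_ofReal_iff {α : Type*} [MeasurableSpace α] {μ ν : Measure α}
    [IsFiniteMeasure μ] [IsFiniteMeasure ν] {c δ : ℝ} (hc : 0 ≤ c) (hδ : 0 ≤ δ) (A : Set α) :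
    μ A ≤ ENNReal.ofReal c * ν A + ENNReal.ofReal δ ↔ μ.real A ≤ c * ν.real A + δ := by
  rw [← ofReal_measureReal (μ := μ), ← ofReal_measureReal (μ := ν), ← ENNReal.ofReal_mul hc,
    ← ENNReal.ofReal_add (by positivity) hδ, ENNReal.ofReal_le_ofReal_iff (by positivity)]

theorem gaussian_mechanism_privacy_iff_general
    (Δ σ ε δ : ℝ) (hΔ : 0 < Δ) (hσ : 0 < σ) (hε : 0 ≤ ε) (hδ₀ : 0 ≤ δ) :
    (∀ t : ℝ, |t| ≤ Δ → ∀ A : Set ℝ, MeasurableSet A →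
        gaussianReal t ⟨σ ^ 2, sq_nonneg σ⟩ A ≤
          ENNReal.ofReal (Real.exp ε) * gaussianReal 0 ⟨σ ^ 2, sq_nonneg σ⟩ A +
            ENNReal.ofReal δ) ↔
      gaussCDF (Δ / (2 * σ) - ε * σ / Δ) -
          Real.exp ε * gaussCDF (-(Δ / (2 * σ)) - ε * σ / Δ) ≤ δ := by
  set v : ℝ≥0 := ⟨σ ^ 2, sq_nonneg σ⟩
  simp_rw [measure_le_ofReal_mul_add_ofReal_iff (exp_pos ε).le hδ₀]
  change _ ↔ gaussianPrivacyProfile σ ε Δ ≤ δ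
  constructor
  · intro h
    rw [gaussianPrivacyProfile_eq_measureReal_Ioi hσ ε hΔ]
    linarith [h Δ (abs_of_pos hΔ).le _ (measurableSet_Ioi (a := ε * σ ^ 2 / Δ + Δ / 2))]
  · intro h t ht A hA
    rcases eq_or_ne t 0 with rfl | ht0
    · nlinarith [one_le_exp hε, measureReal_nonneg (μ := gaussianReal 0 v) (s := A)]
    · have hprofile_mono := (gaussianPrivacyProfile_strictMonoOn hσ ε).monotoneOn
        (abs_pos.2 ht0) (mem_Ioi.2 hΔ) ht
      linarith [measureReal_gaussianReal_sub_le_gaussianPrivacyProfile hσ ε ht0 hA]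

/-- Exact privacy characterization of the one-dimensional Gaussian mechanism
(Balle–Wang): the `(ε, δ)` likelihood bound between `N(t, σ²)` (for all `|t| ≤ Δ`) and
`N(0, σ²)` holds iff `Φ(Δ/(2σ) − εσ/Δ) − e^ε Φ(−Δ/(2σ) − εσ/Δ) ≤ δ`. -/
theorem gaussian_mechanism_privacy_iff
    (Δ σ ε δ : ℝ) (hΔ : 0 < Δ) (hσ : 0 < σ) (hε : 0 ≤ ε) (hδ₀ : 0 ≤ δ) (hδ₁ : δ ≤ 1) :
    (∀ t : ℝ, |t| ≤ Δ → ∀ A : Set ℝ, MeasurableSet A →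
        gaussianReal t ⟨σ ^ 2, sq_nonneg σ⟩ A ≤
          ENNReal.ofReal (Real.exp ε) * gaussianReal 0 ⟨σ ^ 2, sq_nonneg σ⟩ A +
            ENNReal.ofReal δ) ↔
      gaussCDF (Δ / (2 * σ) - ε * σ / Δ) -
          Real.exp ε * gaussCDF (-(Δ / (2 * σ)) - ε * σ / Δ) ≤ δ :=
  gaussian_mechanism_privacy_iff_general Δ σ ε δ hΔ hσ hε hδ₀
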